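/- arXiv:1605.08403 — 3 statements merged into one kernel-verified Lean document; each statement's English description precedes it below -/
import Mathlib

section
/- In two-sample voting on a graph with opinion partition C = (A₁,…,A_k), the expected stationary measure of the set of vertices holding opinion j after one round satisfies E[π(A_j') | C] = π(A_j) + R(V,A_j) − S_C(A_j), where a vertex x adopts opinion i if both its two independent samples (each drawn according to P(x,·)) fall in A_i, and otherwise keeps its opinion. -/
open Finset

/-- One round of two-sample voting: each vertex x draws two independent samples from
P(x,·), adopts opinion i if both samples are in A_i, else keeps its opinion. The
expected measure of opinion j after one round (computed vertex-by-vertex, where the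
probability that x holds opinion j afterwards is `1 - ∑_{i≠j} P(x,A_i)²` if x ∈ A_j
and `P(x,A_j)²` otherwise) equals π(A_j) + R(V,A_j) − S_C(A_j). -/
theorem two_sample_expectation {V : Type*} [Fintype V] [DecidableEq V]
    (P : V → V → ℝ) (pi : V → ℝ)
    (hP0 : ∀ x y, 0 ≤ P x y) (hP1 : ∀ x, ∑ y, P x y = 1)
    (hpi0 : ∀ x, 0 ≤ pi x) (hpi1 : ∑ x, pi x = 1)
    (k : ℕ) (A : Fin k → Finset V)
    (hdisj : ∀ i j, i ≠ j → Disjoint (A i) (A j))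
    (hcover : ∀ x : V, ∃ i, x ∈ A i)
    (j : Fin k) :
    ∑ x, pi x * (if x ∈ A j then 1 - ∑ i ∈ Finset.univ.erase j, (∑ y ∈ A i, P x y) ^ 2
                  else (∑ y ∈ A j, P x y) ^ 2)
      = (∑ x ∈ A j, pi x) + (∑ x, pi x * (∑ y ∈ A j, P x y) ^ 2)
        - ∑ i, ∑ x ∈ A j, pi x * (∑ y ∈ A i, P x y) ^ 2 := by
  classical
  have herase : ∀ x : V, ∑ i ∈ Finset.univ.erase j, (∑ y ∈ A i, P x y) ^ 2
      = (∑ i, (∑ y ∈ A i, P x y) ^ 2) - (∑ y ∈ A j, P x y) ^ 2 := by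
    intro x
    rw [Finset.sum_erase_eq_sub (Finset.mem_univ j)]
  have hsplit : ∀ f : V → ℝ, ∑ x, f x = ∑ x ∈ A j, f x + ∑ x ∈ (A j)ᶜ, f x := by
    intro f
    exact (Finset.sum_add_sum_compl (A j) f).symm
  rw [hsplit (fun x => pi x * _), hsplit (fun x => pi x * (∑ y ∈ A j, P x y) ^ 2),
    Finset.sum_comm]
  have h1 : ∑ x ∈ A j, pi x *
      (if x ∈ A j then 1 - ∑ i ∈ Finset.univ.erase j, (∑ y ∈ A i, P x y) ^ 2
        else (∑ y ∈ A j, P x y) ^ 2)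
      = ∑ x ∈ A j, pi x * (1 - ((∑ i, (∑ y ∈ A i, P x y) ^ 2) - (∑ y ∈ A j, P x y) ^ 2)) :=
    Finset.sum_congr rfl (fun x hx => by rw [if_pos hx, herase x])
  have h2 : ∑ x ∈ (A j)ᶜ, pi x *
      (if x ∈ A j then 1 - ∑ i ∈ Finset.univ.erase j, (∑ y ∈ A i, P x y) ^ 2
        else (∑ y ∈ A j, P x y) ^ 2)
      = ∑ x ∈ (A j)ᶜ, pi x * (∑ y ∈ A j, P x y) ^ 2 :=
    Finset.sum_congr rfl (fun x hx => by rw [if_neg (Finset.mem_compl.mp hx)])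
  rw [h1, h2]
  simp only [mul_sub, mul_one, Finset.sum_sub_distrib, Finset.mul_sum]
  ring
end

section
/- Under the hypotheses that Σ_{i=2}^k π(A_i)² ≤ π(A_2), π(A_1^c) ≥ 1/3, λ ≤ Δ/32 where Δ = π(A_1) − π(A_2) > 0, and the bounds E₁ ≥ π(A₁)(1 + π(A₁) − Σ_i π(A_i)²) − 2λπ(A₁) − (5/4)λ² and E_j ≤ π(A₂)(1 + π(A₂) − Σ_i π(A_i)²) + (1/4)λ² + 2λπ(A₁), one has E₁ − E_j ≥ Δ(1 + π(A₁)/7). -/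
open Finset

/-- Algebraic core of the one-step drift of the plurality gap (Lemma 4). -/
theorem gap_drift (k : ℕ) (hk : 2 ≤ k) (a : Fin k → ℝ)
    (hmono : ∀ i j : Fin k, i ≤ j → a j ≤ a i)
    (h0 : ∀ i, 0 ≤ a i) (hsum : ∑ i, a i = 1)
    (lam : ℝ) (hlam0 : 0 ≤ lam)
    (hsq : ∑ i ∈ Finset.univ.erase (⟨0, by omega⟩ : Fin k), a i ^ 2
      ≤ a (⟨1, by omega⟩ : Fin k))
    (hA1c : 1 - a (⟨0, by omega⟩ : Fin k) ≥ 1 / 3)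
    (hΔpos : 0 < a (⟨0, by omega⟩ : Fin k) - a (⟨1, by omega⟩ : Fin k))
    (hlam : lam ≤ (a (⟨0, by omega⟩ : Fin k) - a (⟨1, by omega⟩ : Fin k)) / 32)
    (E1 Ej : ℝ)
    (hE1 : E1 ≥ a (⟨0, by omega⟩ : Fin k) *
        (1 + a (⟨0, by omega⟩ : Fin k) - ∑ i, a i ^ 2)
      - 2 * lam * a (⟨0, by omega⟩ : Fin k) - (5 / 4) * lam ^ 2)
    (hEj : Ej ≤ a (⟨1, by omega⟩ : Fin k) *
        (1 + a (⟨1, by omega⟩ : Fin k) - ∑ i, a i ^ 2)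
      + (1 / 4) * lam ^ 2 + 2 * lam * a (⟨0, by omega⟩ : Fin k)) :
    E1 - Ej ≥ (a (⟨0, by omega⟩ : Fin k) - a (⟨1, by omega⟩ : Fin k)) *
      (1 + a (⟨0, by omega⟩ : Fin k) / 7) := by
  set i0 : Fin k := ⟨0, by omega⟩
  set i1 : Fin k := ⟨1, by omega⟩
  set S : ℝ := ∑ i, a i ^ 2 with hS
  have hsplit : S = a i0 ^ 2 + ∑ i ∈ Finset.univ.erase i0, a i ^ 2 := by
    rw [hS, ← Finset.add_sum_erase _ _ (Finset.mem_univ i0)]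
  have hSle : S ≤ a i0 ^ 2 + a i1 := by rw [hsplit]; linarith
  have hy0 : 0 ≤ a i1 := h0 i1
  have hx : a i0 ≤ 2/3 := by linarith
  have hΔ := hΔpos
  nlinarith [mul_nonneg hlam0 hlam0, sq_nonneg lam,
    mul_le_mul_of_nonneg_left hSle (le_of_lt hΔ),
    mul_le_mul_of_nonneg_left hlam hlam0,
    mul_le_mul_of_nonneg_left hlam (le_of_lt hΔ),
    mul_nonneg (le_of_lt hΔ) hy0, sq_nonneg (a i0 - a i1)]
end

section
/- Suppose real sequences x(i), y(i) with 0 < y(0) < x(0) ≤ 2/3 satisfy, for every i ≥ 1 with x(i−1) < 2/3: x(i) ≥ x(i−1)(1 + y(i−1)/5) and y(i) ≥ y(i−1)(1 + x(i−1)/10), and both sequences are non-decreasing. Then there exists i ≤ C·(1/x(0))·(log(x(0)/y(0)) + 1) for an absolute constant C such that x(i) ≥ 2/3. -/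
/-!
While `x < 2/3`, the gap `y` grows by a factor `1 + x(0)/10` per round, so after
`O(log(x(0)/y(0)) / x(0))` rounds it exceeds `x(0)`. From then on `m = min x y` obeys
`m' ≥ m (1 + m/10)`, so `1/m` drops by at least `1/11` per round and would become negative
after `11/x(0)` further rounds.
-/

open Real

lemma half_le_log_one_add {a : ℝ} (ha : 0 ≤ a) (ha2 : a ≤ 2) : a / 2 ≤ log (1 + a) := by
  refine le_trans ?_ (le_log_one_add_of_nonneg ha)
  rw [div_le_div_iff₀ (by norm_num) (by linarith)]
  nlinarith

lemma le_of_geom_growth {u : ℕ → ℝ} {a b : ℝ} {n : ℕ} (ha : 0 ≤ a) (ha2 : a ≤ 2)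
    (hu0 : 0 < u 0) (hb : 0 < b) (hstep : ∀ k < n, (1 + a) * u k ≤ u (k + 1))
    (hn : 2 * log (b / u 0) ≤ n * a) : b ≤ u n := by
  have hlog : log (b / u 0) ≤ log ((1 + a) ^ n) := by
    rw [log_pow]
    nlinarith [half_le_log_one_add ha ha2, (Nat.cast_nonneg n : (0 : ℝ) ≤ n)]
  have hratio : b / u 0 ≤ (1 + a) ^ n :=
    (log_le_log_iff (div_pos hb hu0) (by positivity)).1 hlog
  calc b ≤ (1 + a) ^ n * u 0 := (div_le_iff₀ hu0).1 hratio
    _ ≤ u n := geom_le (by linarith) n hstep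

section QuadraticGrowth

variable {m : ℕ → ℝ} {c : ℝ} {n : ℕ}

lemma inv_le_inv_sub_of_mul_one_add_div_le {μ μ' : ℝ} (hc : 0 < c) (hμ : 0 < μ) (hμ1 : μ ≤ 1)
    (hstep : μ * (1 + μ / c) ≤ μ') : μ'⁻¹ ≤ μ⁻¹ - (c + 1)⁻¹ :=
  calc μ'⁻¹ ≤ (μ * (1 + μ / c))⁻¹ := inv_anti₀ (by positivity) hstep
    _ = μ⁻¹ - (c + μ)⁻¹ := by field_simp; ring
    _ ≤ μ⁻¹ - (c + 1)⁻¹ := by gcongr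

lemma inv_le_inv_sub_of_quadratic_growth (hc : 0 < c) (hpos : ∀ k ≤ n, 0 < m k)
    (hle : ∀ k < n, m k ≤ 1) (hstep : ∀ k < n, m k * (1 + m k / c) ≤ m (k + 1)) :
    (m n)⁻¹ ≤ (m 0)⁻¹ - n / (c + 1) := by
  induction n with
  | zero => simp
  | succ n ih =>
    have hn := ih (fun k hk => hpos k (by omega)) (fun k hk => hle k (by omega))
      (fun k hk => hstep k (by omega))
    have hlast := inv_le_inv_sub_of_mul_one_add_div_le hc (hpos n (by omega)) (hle n (by omega))
      (hstep n (by omega))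
    push_cast
    rw [add_div, ← sub_sub, div_eq_mul_inv 1, one_mul]
    linarith

lemma lt_div_of_quadratic_growth (hc : 0 < c) (hpos : ∀ k ≤ n, 0 < m k)
    (hle : ∀ k < n, m k ≤ 1) (hstep : ∀ k < n, m k * (1 + m k / c) ≤ m (k + 1)) :
    (n : ℝ) < (c + 1) / m 0 := by
  have hinv := inv_le_inv_sub_of_quadratic_growth hc hpos hle hstep
  have hn : (n : ℝ) / (c + 1) < (m 0)⁻¹ := by linarith [inv_pos.2 (hpos n le_rfl)]
  rwa [div_lt_iff₀ (by linarith), mul_comm, ← div_eq_mul_inv] at hn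

end QuadraticGrowth

lemma min_mul_one_add_le_min {x y x' y' : ℝ} (hx : 0 ≤ x) (hy : 0 ≤ y)
    (hx' : x * (1 + y / 5) ≤ x') (hy' : y * (1 + x / 10) ≤ y') :
    min x y * (1 + min x y / 10) ≤ min x' y' := by
  have hmin : 0 ≤ min x y := le_min hx hy
  refine le_min ?_ ?_
  · calc min x y * (1 + min x y / 10) ≤ x * (1 + y / 5) := by
          gcongr ?_ * (1 + ?_)
          · exact min_le_left x y
          · linarith [min_le_right x y]
      _ ≤ x' := hx'
  · calc min x y * (1 + min x y / 10) ≤ y * (1 + x / 10) := by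
          gcongr
          · exact min_le_right x y
          · exact min_le_left x y
      _ ≤ y' := hy'

lemma ceil_add_ceil_le {a L : ℝ} (ha : 0 < a) (ha1 : a ≤ 2 / 3) (hL : 0 ≤ L) :
    ((⌈20 * L / a⌉₊ + ⌈11 / a⌉₊ : ℕ) : ℝ) ≤ 100 * (1 / a) * (L + 1) := by
  have h1 := Nat.ceil_lt_add_one (by positivity : 0 ≤ 20 * L / a)
  have h2 := Nat.ceil_lt_add_one (by positivity : 0 ≤ 11 / a)
  have ht : 3 / 2 ≤ 1 / a := by rw [le_div_iff₀ ha]; linarith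
  have hLt : 0 ≤ L * (1 / a) := mul_nonneg hL (by positivity)
  rw [mul_div_assoc, div_eq_mul_one_div L, div_eq_mul_one_div 11] at *
  push_cast
  linarith

/-- Deterministic iteration argument (Lemma 5): the recursive growth inequalities
force x(i) ≥ 2/3 within O((1/x(0))·log(x(0)/y(0))) rounds; C = 100 suffices. -/
theorem iteration_bound (x y : ℕ → ℝ)
    (hy0 : 0 < y 0) (hxy : y 0 < x 0) (hx0 : x 0 ≤ 2 / 3)
    (hmx : ∀ i, x i ≤ x (i + 1)) (hmy : ∀ i, y i ≤ y (i + 1))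
    (hrec : ∀ i : ℕ, 1 ≤ i → x (i - 1) < 2 / 3 →
      x i ≥ x (i - 1) * (1 + y (i - 1) / 5) ∧
      y i ≥ y (i - 1) * (1 + x (i - 1) / 10)) :
    ∃ i : ℕ, (i : ℝ) ≤ 100 * (1 / x 0) * (Real.log (x 0 / y 0) + 1) ∧ x i ≥ 2 / 3 := by
  by_contra! hcon
  have hx0pos : 0 < x 0 := hy0.trans hxy
  have hxge (i : ℕ) : x 0 ≤ x i := monotone_nat_of_le_succ hmx (Nat.zero_le i)
  have hxpos (i : ℕ) : 0 < x i := hx0pos.trans_le (hxge i)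
  have hypos (i : ℕ) : 0 < y i := hy0.trans_le (monotone_nat_of_le_succ hmy (Nat.zero_le i))
  set N₁ := ⌈20 * log (x 0 / y 0) / x 0⌉₊
  set N₂ := ⌈11 / x 0⌉₊
  have hlog : 0 ≤ log (x 0 / y 0) := log_nonneg ((one_le_div hy0).2 hxy.le)
  have hlt (i : ℕ) (hi : i ≤ N₁ + N₂) : x i < 2 / 3 :=
    hcon i ((Nat.cast_le.2 hi).trans (ceil_add_ceil_le hx0pos hx0 hlog))
  have hstep (i : ℕ) (hi : i < N₁ + N₂) :
      x i * (1 + y i / 5) ≤ x (i + 1) ∧ y i * (1 + x i / 10) ≤ y (i + 1) := by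
    simpa using hrec (i + 1) (by omega) (by simpa using hlt i hi.le)
  have hyN₁ : x 0 ≤ y N₁ := by
    refine le_of_geom_growth (a := x 0 / 10) (by positivity) (by linarith) hy0 hx0pos
      (fun k hk => ?_) ?_
    · nlinarith [(hstep k (by omega)).2, hxge k, hypos k]
    · have hceil := Nat.le_ceil (20 * log (x 0 / y 0) / x 0)
      rw [div_le_iff₀ hx0pos] at hceil
      linarith
  set m : ℕ → ℝ := fun k => min (x (N₁ + k)) (y (N₁ + k))
  have hm0 : x 0 ≤ m 0 := le_min (hxge _) hyN₁
  have hN₂ := lt_div_of_quadratic_growth (m := m) (n := N₂) (by norm_num)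
    (fun k _ => lt_min (hxpos _) (hypos _))
    (fun k hk => (min_le_left _ _).trans (by linarith [hlt (N₁ + k) (by omega)]))
    (fun k hk => min_mul_one_add_le_min (hxpos _).le (hypos _).le
      (hstep _ (by omega)).1 (hstep _ (by omega)).2)
  norm_num at hN₂
  have hceil := Nat.le_ceil (11 / x 0)
  have hm : 11 / m 0 ≤ 11 / x 0 := by gcongr
  linarith
end
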